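/- arXiv:2006.10247 — 3 statements merged into one kernel-verified Lean document; each statement's English description precedes it below -/
import Mathlib

section
/- Let (I_1,…,I_n) be a Grassmannlike necklace of type (k,n) with removal permutation ρ and insertion permutation ι. Then I_1 = {a ∈ {1,…,n} : ρ⁻¹(a) ≤ ι⁻¹(a)}. Consequently, two Grassmannlike necklaces of type (k,n) with the same removal permutation and the same insertion permutation are equal. -/
open Finset

/-- `f` is an affine permutation of period `n`: an `n`-periodic bijection of `ℤ`. -/
def IsAffinePerm (n : ℕ) (f : Equiv.Perm ℤ) : Prop :=
  ∀ a : ℤ, f (a + n) = f a + n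

/-- The length of an affine permutation of period `n`:
the number of pairs `(i, j)` with `i ∈ {1,…,n}`, `j ∈ ℤ`, `i < j` and `f i > f j`. -/
noncomputable def aLen (n : ℕ) (f : Equiv.Perm ℤ) : ℕ :=
  Set.ncard {p : ℤ × ℤ | 1 ≤ p.1 ∧ p.1 ≤ (n : ℤ) ∧ p.1 < p.2 ∧ f p.2 < f p.1}

/-- `t` is the affine transposition `t_{a,b}` (period `n`): it swaps `a + jn` and `b + jn`
for all `j : ℤ` and fixes everything else; requires `a ≢ b (mod n)`. -/
def IsAffTranspAt (n : ℕ) (a b : ℤ) (t : Equiv.Perm ℤ) : Prop :=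
  ¬ ((n : ℤ) ∣ b - a) ∧
    ∀ x : ℤ,
      ((n : ℤ) ∣ x - a → t x = x - a + b) ∧
      ((n : ℤ) ∣ x - b → t x = x - b + a) ∧
      (¬ (n : ℤ) ∣ x - a → ¬ (n : ℤ) ∣ x - b → t x = x)

/-- `t` is an affine transposition of period `n`. -/
def IsAffTransp (n : ℕ) (t : Equiv.Perm ℤ) : Prop :=
  ∃ a b : ℤ, IsAffTranspAt n a b t

/-- The right associated reflections `T_R(f)`: affine transpositions `t` with `ℓ(f t) < ℓ(f)`. -/
def TR (n : ℕ) (f : Equiv.Perm ℤ) : Set (Equiv.Perm ℤ) :=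
  {t | IsAffTransp n t ∧ aLen n (f * t) < aLen n f}

/-- The left associated reflections `T_L(f)`: affine transpositions `t` with `ℓ(t f) < ℓ(f)`. -/
def TL (n : ℕ) (f : Equiv.Perm ℤ) : Set (Equiv.Perm ℤ) :=
  {t | IsAffTransp n t ∧ aLen n (t * f) < aLen n f}

/-- `u ≤_R f`: the factorization `f = u · (u⁻¹ f)` is length-additive. -/
def LeR (n : ℕ) (u f : Equiv.Perm ℤ) : Prop :=
  aLen n f = aLen n u + aLen n (u⁻¹ * f)

/-- `Bound k n`: bounded affine permutations, `a < f a ≤ a + n` with average shift `k`. -/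
def Bound (k n : ℕ) : Set (Equiv.Perm ℤ) :=
  {f | IsAffinePerm n f ∧ (∀ a : ℤ, a < f a ∧ f a ≤ a + n) ∧
    (∑ a ∈ Finset.Icc (1 : ℤ) (n : ℤ), (f a - a)) = (k : ℤ) * n}

/-- A permutation of `{1,…,n}` (modelled on `Fin n`) has type `(k,n)`:
`#{a : a ≤ π⁻¹ a} = k`. -/
def IsType (k n : ℕ) (π : Equiv.Perm (Fin n)) : Prop :=
  (Finset.univ.filter (fun a : Fin n => a ≤ π⁻¹ a)).card = k

/-- `f` is the lift of `π` : the affine permutation with `f a = π a` if `π a > a`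
and `f a = π a + n` otherwise (identifying `v : Fin n` with the integer `v + 1 ∈ {1,…,n}`). -/
def IsLift (n : ℕ) (π : Equiv.Perm (Fin n)) (f : Equiv.Perm ℤ) : Prop :=
  IsAffinePerm n f ∧ ∀ a : Fin n,
    f ((a.val : ℤ) + 1) =
      if (a.val : ℤ) < ((π a).val : ℤ) then ((π a).val : ℤ) + 1
      else ((π a).val : ℤ) + 1 + n

/-- The position of `a` in the cyclic (linear) order `<_i` on `Fin n` starting at `i`. -/
def cPos (n : ℕ) [NeZero n] (i a : Fin n) : ℕ := (a - i).val

/-- `a, b, c, d` is a cyclically ordered quadruple. -/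
def CyclicOrdered (n : ℕ) [NeZero n] (a b c d : Fin n) : Prop :=
  0 < cPos n a b ∧ cPos n a b < cPos n a c ∧ cPos n a c < cPos n a d

/-- Two subsets `I, J` of `Fin n` are weakly separated. -/
def WeaklySeparated (n : ℕ) [NeZero n] (I J : Finset (Fin n)) : Prop :=
  ¬ ∃ a b c d : Fin n, CyclicOrdered n a b c d ∧
      a ∈ I ∧ a ∉ J ∧ c ∈ I ∧ c ∉ J ∧ b ∈ J ∧ b ∉ I ∧ d ∈ J ∧ d ∉ I

/-- `(I_1,…,I_n)` (indexed by `Fin n`, cyclically) is a Grassmannlike necklace of type `(k,n)`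
with removal permutation `ρ` and insertion permutation `ι`. -/
def IsGrassNecklace (n k : ℕ) [NeZero n] (I : Fin n → Finset (Fin n))
    (ρ ι : Equiv.Perm (Fin n)) : Prop :=
  (∀ a : Fin n, (I a).card = k) ∧
    ∀ a : Fin n, ρ a ∈ I a ∧ I (a + 1) = insert (ι a) ((I a).erase (ρ a))

/-- Auxiliary construction of the Grassmannlike necklace with removal `ρ` and insertion `ι`. -/
def neckAux (n : ℕ) [NeZero n] (ρ ι : Equiv.Perm (Fin n)) : ℕ → Finset (Fin n)
  | 0 => Finset.univ.filter (fun a : Fin n => ρ⁻¹ a ≤ ι⁻¹ a)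
  | m + 1 => insert (ι (Fin.ofNat n m)) ((neckAux n ρ ι m).erase (ρ (Fin.ofNat n m)))

/-- The Grassmannlike necklace with removal permutation `ρ` and insertion permutation `ι`:
its first term is `{a : ρ⁻¹ a ≤ ι⁻¹ a}` and `I_{a+1} = (I_a ∖ {ρ a}) ∪ {ι a}`.
The forward Grassmann necklace of `π` is `necklace n 1 π`; the reverse Grassmann
necklace of `π` is `necklace n π⁻¹ 1`. -/
def necklace (n : ℕ) [NeZero n] (ρ ι : Equiv.Perm (Fin n)) (j : Fin n) : Finset (Fin n) :=
  neckAux n ρ ι j.val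

/-- The sorted list of positions (in the order `<_i`) of the elements of `S`. -/
def sortedShift (n : ℕ) [NeZero n] (i : Fin n) (S : Finset (Fin n)) : List ℕ :=
  (S.image (fun a => cPos n i a)).sort (· ≤ ·)

/-- `S ≤_i T` componentwise on `<_i`-sorted lists. -/
def leCyc (n : ℕ) [NeZero n] (i : Fin n) (S T : Finset (Fin n)) : Prop :=
  List.Forall₂ (· ≤ ·) (sortedShift n i S) (sortedShift n i T)

/-- The positroid `𝓜_π` of `π` (via Oh's theorem, taken as the definition). -/
def positroid (k n : ℕ) [NeZero n] (π : Equiv.Perm (Fin n)) : Set (Finset (Fin n)) :=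
  {S | S.card = k ∧ ∀ j : Fin n, leCyc n j (necklace n 1 π j) S}

/-- `v` lies strictly inside the arc from `w` clockwise to `x`. -/
def InArc (n : ℕ) [NeZero n] (w v x : Fin n) : Prop :=
  0 < cPos n w v ∧ cPos n w v < cPos n w x

/-- The chords `w ↦ x` and `y ↦ z` are noncrossing: they do not intersect,
including at boundary vertices. -/
def Noncrossing (n : ℕ) [NeZero n] (w x y z : Fin n) : Prop :=
  w ≠ y ∧ w ≠ z ∧ x ≠ y ∧ x ≠ z ∧
    ¬ ((InArc n w y x ∧ InArc n x z w) ∨ (InArc n w z x ∧ InArc n x y w))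

/-- The (distinct) chords `w ↦ x` and `y ↦ z` are crossing. -/
def Crossing (n : ℕ) [NeZero n] (w x y z : Fin n) : Prop :=
  (w ≠ y ∨ x ≠ z) ∧ ¬ Noncrossing n w x y z

/-- The noncrossing chords `w ↦ x` and `y ↦ z` are aligned:
`w <_w y <_w z <_w x`, or `w <_w x <_w z <_w y`, or `w = x` and `w <_w y <_w z`. -/
def Aligned (n : ℕ) [NeZero n] (w x y z : Fin n) : Prop :=
  Noncrossing n w x y z ∧
    ((0 < cPos n w y ∧ cPos n w y < cPos n w z ∧ cPos n w z < cPos n w x) ∨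
     (0 < cPos n w x ∧ cPos n w x < cPos n w z ∧ cPos n w z < cPos n w y) ∨
     (w = x ∧ 0 < cPos n w y ∧ cPos n w y < cPos n w z))

/-- A noncrossing toggle relating two Grassmannlike necklaces, each encoded by its pair
(removal permutation, insertion permutation): at some position `p`, the toggle is defined
(`ρ(p-1) ≠ ι(p)` and `ρ(p) ≠ ι(p-1)`), the chords `ρ(p-1) ↦ ι(p-1)` and `ρ(p) ↦ ι(p)`
are noncrossing, and the new permutations are obtained by right multiplication by the
transposition of positions `p-1, p`. -/
def NoncrossingToggle (n : ℕ) [NeZero n]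
    (N N' : Equiv.Perm (Fin n) × Equiv.Perm (Fin n)) : Prop :=
  ∃ p : Fin n,
    N.1 (p - 1) ≠ N.2 p ∧ N.1 p ≠ N.2 (p - 1) ∧
    Noncrossing n (N.1 (p - 1)) (N.2 (p - 1)) (N.1 p) (N.2 p) ∧
    N'.1 = N.1 * Equiv.swap (p - 1) p ∧ N'.2 = N.2 * Equiv.swap (p - 1) p

/-- The Plücker coordinate `Δ_I(M)`: the determinant of the `k × k` submatrix of `M`
on the columns indexed by `I` (in increasing order); junk value `0` if `I.card ≠ k`. -/
noncomputable def plucker (k n : ℕ) (M : Matrix (Fin k) (Fin n) ℂ) (I : Finset (Fin n)) : ℂ :=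
  if h : I.card = k then
    Matrix.det (Matrix.of (fun r c : Fin k => M r ((I.orderIsoOfFin h) c).1))
  else 0

/-- The matrix cone `Π°_π` over the open positroid variety of `π`: full-rank `k × n`
matrices with `Δ_J = 0` for `J ∉ 𝓜_π` and nonvanishing forward-necklace Plücker coordinates. -/
def openPos (k n : ℕ) [NeZero n] (π : Equiv.Perm (Fin n)) : Set (Matrix (Fin k) (Fin n) ℂ) :=
  {M | M.rank = k ∧
    (∀ J : Finset (Fin n), J.card = k → J ∉ positroid k n π → plucker k n M J = 0) ∧
    (∀ j : Fin n, plucker k n M (necklace n 1 π j) ≠ 0)}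

/-- `N` is the right twist of `M` along the necklace `I` with removal permutation `ρ`:
for all `a` and all `b ∈ I a`, `⟨N_a, M_b⟩ = δ_{b, ρ a}`. -/
def IsRightTwist (k n : ℕ) (I : Fin n → Finset (Fin n)) (ρ : Equiv.Perm (Fin n))
    (M N : Matrix (Fin k) (Fin n) ℂ) : Prop :=
  ∀ a : Fin n, ∀ b ∈ I a, (∑ j : Fin k, N j a * M j b) = if b = ρ a then 1 else 0

/-- `N` is the left twist of `M` along the necklace `I` with insertion permutation `ι`:
for all `a` and all `b ∈ I (a+1)`, `⟨N_a, M_b⟩ = δ_{b, ι a}`. -/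
def IsLeftTwist (k n : ℕ) [NeZero n] (I : Fin n → Finset (Fin n)) (ι : Equiv.Perm (Fin n))
    (M N : Matrix (Fin k) (Fin n) ℂ) : Prop :=
  ∀ a : Fin n, ∀ b ∈ I (a + 1), (∑ j : Fin k, N j a * M j b) = if b = ι a then 1 else 0

/-!
Whether `x` lies in `I 0` is decided by the last event touching `x` before the index wraps
around to `0`: its insertion at step `ι⁻¹ x` or its removal at step `ρ⁻¹ x`. On a tie the
insertion wins, since `I (a + 1)` erases `ρ a` before inserting `ι a`. Uniqueness follows
because the recurrence determines the whole necklace from its first term.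
-/

open Fin.NatCast

section CyclicRecurrence

variable {α : Type*} [DecidableEq α] {n : ℕ} [NeZero n] {I : Fin n → Finset α} {ρ ι : Fin n → α}

theorem mem_succ_iff_of_step (hstep : ∀ a, I (a + 1) = insert (ι a) ((I a).erase (ρ a)))
    (a : Fin n) (x : α) : x ∈ I (a + 1) ↔ x = ι a ∨ (x ≠ ρ a ∧ x ∈ I a) := by
  rw [hstep, mem_insert, mem_erase]

theorem mem_iff_mem_of_forall_ne (hstep : ∀ a, I (a + 1) = insert (ι a) ((I a).erase (ρ a)))
    {x : α} {a b : ℕ} (hab : a ≤ b) (hx : ∀ t : ℕ, a ≤ t → t < b → ρ t ≠ x ∧ ι t ≠ x) :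
    x ∈ I a ↔ x ∈ I b := by
  induction b, hab using Nat.le_induction with
  | base => rfl
  | succ b hab ih =>
    obtain ⟨hρ, hι⟩ := hx b hab b.lt_succ_self
    rw [ih fun t h₁ h₂ => hx t h₁ (by omega), Nat.cast_succ, mem_succ_iff_of_step hstep]
    simp [Ne.symm hρ, Ne.symm hι]

end CyclicRecurrence

theorem mem_zero_iff_of_step {α : Type*} [DecidableEq α] {n : ℕ} [NeZero n]
    {I : Fin n → Finset α} {ρ ι : Fin n ≃ α}
    (hstep : ∀ a, I (a + 1) = insert (ι a) ((I a).erase (ρ a))) (x : α) :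
    x ∈ I 0 ↔ ρ.symm x ≤ ι.symm x := by
  have hwrap : ∀ e : Fin n, ρ.symm x ≤ e → ι.symm x ≤ e → (x ∈ I (e + 1) ↔ x ∈ I 0) := by
    intro e hρe hιe
    have key := mem_iff_mem_of_forall_ne (ρ := ρ) (ι := ι) hstep (x := x)
      (a := e.val + 1) (b := n) e.is_lt fun t h₁ h₂ => by
        simp only [Ne, ← Equiv.eq_symm_apply, Fin.ext_iff, Fin.val_cast_of_lt h₂]
        rw [Fin.le_def] at hρe hιe
        omega
    rwa [Nat.cast_succ, Fin.cast_val_eq_self, Fin.natCast_self] at key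
  rcases le_or_gt (ρ.symm x) (ι.symm x) with hle | hlt
  · rw [← hwrap _ hle le_rfl, mem_succ_iff_of_step hstep, Equiv.apply_symm_apply]
    simp [hle]
  · rw [← hwrap _ le_rfl hlt.le, mem_succ_iff_of_step hstep, Equiv.apply_symm_apply,
      ← ι.symm_apply_eq, eq_comm]
    simp [hlt.ne', hlt.not_ge]

theorem eq_of_step_of_zero_eq {β : Type*} {n : ℕ} [NeZero n] {I J : Fin n → β}
    (g : Fin n → β → β) (hI : ∀ a, I (a + 1) = g a (I a)) (hJ : ∀ a, J (a + 1) = g a (J a))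
    (h₀ : I 0 = J 0) : I = J := by
  have hnat : ∀ t : ℕ, I t = J t := by
    intro t
    induction t with
    | zero => simpa using h₀
    | succ t ih => rw [Nat.cast_succ, hI, hJ, ih]
  funext a
  simpa using hnat a

/-- A Grassmannlike necklace is determined by its removal and insertion
permutations; its first term is `{a : ρ⁻¹ a ≤ ι⁻¹ a}`. -/
theorem grassNecklace_first_term_and_unique
    (n k : ℕ) [NeZero n] (I : Fin n → Finset (Fin n)) (ρ ι : Equiv.Perm (Fin n))
    (hI : IsGrassNecklace n k I ρ ι) :
    I 0 = Finset.univ.filter (fun a : Fin n => ρ⁻¹ a ≤ ι⁻¹ a) ∧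
    ∀ J : Fin n → Finset (Fin n), IsGrassNecklace n k J ρ ι → J = I := by
  have first_term : ∀ K, IsGrassNecklace n k K ρ ι →
      K 0 = univ.filter (fun a : Fin n => ρ⁻¹ a ≤ ι⁻¹ a) := fun K hK => by
    ext x
    simpa using mem_zero_iff_of_step (fun a => (hK.2 a).2) x
  refine ⟨first_term I hI, fun J hJ => ?_⟩
  refine eq_of_step_of_zero_eq (fun a S => insert (ι a) (S.erase (ρ a)))
    (fun a => (hJ.2 a).2) (fun a => (hI.2 a).2) ?_
  rw [first_term J hJ, first_term I hI]
end

section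
/- Let 𝓘 = (I_1,…,I_n) be a Grassmannlike necklace of type (k,n) with removal permutation ρ, insertion permutation ι, and underlying permutation μ = ρ⁻¹∘ι. Then μ has type (k,n), and for every index j one has I_j = ρ(vecI_j) and I_j = ι(cevI_j) (images taken elementwise), where (vecI_1,…,vecI_n) is the forward Grassmann necklace of μ and (cevI_1,…,cevI_n) is the reverse Grassmann necklace of μ. -/
open Finset

/-!
Removing `ρ a` and inserting `ι a` at step `a`, an element `b` enters the necklace right after
step `ι⁻¹ b` and leaves it right after step `ρ⁻¹ b`. Going once around the cycle, `b` lies in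
the first set exactly when it is removed no later than it is inserted, i.e. `ρ⁻¹ b ≤ ι⁻¹ b`.
So a Grassmannlike necklace is determined by `ρ` and `ι`, and its formula is equivariant under
`(ρ, ι) ↦ (σ ρ, σ ι)`; taking `σ = ρ` resp. `σ = ι` gives the forward resp. reverse necklace of
`μ = ρ⁻¹ ι`, and `μ` has type `(k, n)` because the first set of its forward necklace has `k`
elements.
-/

theorem zero_iff_le_of_on_off_step {P : ℕ → Prop} {n r i : ℕ} (hr : r < n)
    (hstep : ∀ m < n, P (m + 1) ↔ i = m ∨ (P m ∧ r ≠ m)) (hPr : P r) (hcyc : P n ↔ P 0) :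
    P 0 ↔ r ≤ i := by
  constructor
  · intro h0
    by_contra! hir
    have hoff : ¬ P (r + 1) := by
      rw [hstep r hr]
      omega
    have hstays_off : ∀ m, r + 1 ≤ m → m ≤ n → ¬ P m := by
      intro m hm
      induction m, hm using Nat.le_induction with
      | base => exact fun _ => hoff
      | succ m hm ih =>
        intro hmn
        rw [hstep m (by omega)]
        exact fun h => h.elim (by omega) fun h => ih (by omega) h.1
    exact hstays_off n (by omega) le_rfl (hcyc.mpr h0)
  · intro hri
    refine Nat.decreasingInduction (motive := fun m _ => P m) (fun m hm h => ?_) hPr (Nat.zero_le r)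
    exact ((hstep m (by omega)).mp h).resolve_left (by omega) |>.1

theorem Fin.ofNat_add_one (n : ℕ) [NeZero n] (m : ℕ) :
    Fin.ofNat n (m + 1) = Fin.ofNat n m + 1 := by
  ext
  simp [Fin.val_add, Nat.add_mod]

section Necklace

variable {n k : ℕ} [NeZero n] {I : Fin n → Finset (Fin n)} {ρ ι : Equiv.Perm (Fin n)}

theorem IsGrassNecklace.mem_succ_iff (hI : IsGrassNecklace n k I ρ ι) (a b : Fin n) :
    b ∈ I (a + 1) ↔ ι⁻¹ b = a ∨ (b ∈ I a ∧ ρ⁻¹ b ≠ a) := by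
  simp only [(hI.2 a).2, Finset.mem_insert, Finset.mem_erase, ne_eq, Equiv.Perm.inv_eq_iff_eq]
  tauto

theorem IsGrassNecklace.mem_zero_iff (hI : IsGrassNecklace n k I ρ ι) (b : Fin n) :
    b ∈ I 0 ↔ ρ⁻¹ b ≤ ι⁻¹ b := by
  refine zero_iff_le_of_on_off_step (P := fun m => b ∈ I (Fin.ofNat n m)) (ρ⁻¹ b).isLt
    (fun m hm => ?_) ?_ (by simp) |>.trans Fin.le_iff_val_le_val.symm
  · simp only [Fin.ofNat_add_one, hI.mem_succ_iff, ne_eq, Fin.ext_iff, Fin.val_ofNat,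
      Nat.mod_eq_of_lt hm]
  · simpa using (hI.2 (ρ⁻¹ b)).1

theorem IsGrassNecklace.eq_necklace (hI : IsGrassNecklace n k I ρ ι) :
    I = necklace n ρ ι := by
  have h : ∀ m, I (Fin.ofNat n m) = neckAux n ρ ι m := by
    intro m
    induction m with
    | zero => ext b; simp [neckAux, hI.mem_zero_iff]
    | succ m ih =>
      rw [neckAux, ← ih, ← (hI.2 _).2, Fin.ofNat_add_one]
  funext j
  simpa [necklace] using h j

end Necklace

theorem neckAux_mul_left {n : ℕ} [NeZero n] (σ ρ ι : Equiv.Perm (Fin n)) (m : ℕ) :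
    neckAux n (σ * ρ) (σ * ι) m = (neckAux n ρ ι m).image σ := by
  induction m with
  | zero =>
    ext b
    simp only [neckAux, Finset.mem_image, Finset.mem_filter, Finset.mem_univ, true_and]
    exact ⟨fun h => ⟨σ⁻¹ b, by simpa using h, by simp⟩, by rintro ⟨a, ha, rfl⟩; simpa using ha⟩
  | succ m ih =>
    rw [neckAux, neckAux, ih, Finset.image_insert, Finset.image_erase σ.injective]
    rfl

theorem necklace_mul_left {n : ℕ} [NeZero n] (σ ρ ι : Equiv.Perm (Fin n)) (j : Fin n) :
    necklace n (σ * ρ) (σ * ι) j = (necklace n ρ ι j).image σ :=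
  neckAux_mul_left σ ρ ι j

/-- A Grassmannlike necklace with removal `ρ`, insertion `ι` and underlying
permutation `μ = ρ⁻¹ ∘ ι` satisfies `𝓘 = ρ(vec𝓘_μ) = ι(cev𝓘_μ)`, and `μ` has type `(k,n)`. -/
theorem grassNecklace_eq_image_of_forward_and_reverse
    (n k : ℕ) [NeZero n] (I : Fin n → Finset (Fin n)) (ρ ι : Equiv.Perm (Fin n))
    (hI : IsGrassNecklace n k I ρ ι) :
    IsType k n (ρ⁻¹ * ι) ∧
    (∀ j : Fin n, I j = (necklace n 1 (ρ⁻¹ * ι) j).image (⇑ρ)) ∧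
    (∀ j : Fin n, I j = (necklace n (ρ⁻¹ * ι)⁻¹ 1 j).image (⇑ι)) := by
  have forward : ∀ j, I j = (necklace n 1 (ρ⁻¹ * ι) j).image ρ := by
    intro j
    rw [← necklace_mul_left, mul_one, mul_inv_cancel_left, hI.eq_necklace]
  have reverse : ∀ j, I j = (necklace n (ρ⁻¹ * ι)⁻¹ 1 j).image ι := by
    intro j
    rw [← necklace_mul_left, mul_one, mul_inv_rev, inv_inv, mul_inv_cancel_left, hI.eq_necklace]
  refine ⟨?_, forward, reverse⟩
  have hcard := hI.1 0
  rw [forward, Finset.card_image_of_injective _ ρ.injective] at hcard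
  simpa [IsType, necklace, neckAux] using hcard
end

section
/- Let π and ι be permutations of {1,…,n} of type (k,n) with ι ≤_∘ π, and let f, i ∈ Bound(k,n) be their lifts. Then ℓ(i⁻¹·f·i) ≤ ℓ(f). -/
open Finset

/-! Length is subadditive on affine permutations: an inversion `(a, b)` of `u * v` is either an
inversion of `v`, or `(v a, v b)` translated by a multiple of `n` is an inversion of `u`, and the
latter assignment is injective.
Hence `ℓ(i⁻¹ f i) ≤ ℓ(i⁻¹ f) + ℓ(i)`, and the right-hand side is `ℓ(f)` since `i ≤_R f`. -/

namespace IsAffinePerm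

variable {n : ℕ} {f g : Equiv.Perm ℤ}

theorem periodic_sub_id (hf : IsAffinePerm n f) : Function.Periodic (fun x => f x - x) n :=
  fun x => by simp only [hf x]; ring

theorem apply_add_mul (hf : IsAffinePerm n f) (x m : ℤ) : f (x + m * n) = f x + m * n := by
  have := hf.periodic_sub_id.int_mul m x
  simp only [Int.cast_id] at this
  linarith

theorem apply_sub_mul (hf : IsAffinePerm n f) (x m : ℤ) : f (x - m * n) = f x - m * n := by
  simpa [neg_mul, ← sub_eq_add_neg] using hf.apply_add_mul x (-m)

protected theorem inv (hf : IsAffinePerm n f) : IsAffinePerm n f⁻¹ := fun a =>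
  f.injective <| by rw [hf]; simp [Equiv.Perm.inv_def]

protected theorem mul (hf : IsAffinePerm n f) (hg : IsAffinePerm n g) :
    IsAffinePerm n (f * g) := fun a => by
  simp only [Equiv.Perm.mul_apply, hg a, hf (g a)]

end IsAffinePerm

def inversions (n : ℕ) (f : Equiv.Perm ℤ) : Set (ℤ × ℤ) :=
  {p : ℤ × ℤ | 1 ≤ p.1 ∧ p.1 ≤ (n : ℤ) ∧ p.1 < p.2 ∧ f p.2 < f p.1}

theorem aLen_eq_ncard_inversions (n : ℕ) (f : Equiv.Perm ℤ) :
    aLen n f = (inversions n f).ncard := rfl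

theorem inversions_zero (f : Equiv.Perm ℤ) : inversions 0 f = ∅ :=
  Set.eq_empty_of_forall_notMem fun _ ⟨h1, h2, _⟩ => by omega

/-- `f x - x` is bounded below by periodicity and `f` is bounded above on the window `[1, n]`,
so every inversion `(a, b)` has `b < f b - min (f - id) < max_{[1,n]} f - min (f - id)`. -/
theorem inversions_finite {n : ℕ} {f : Equiv.Perm ℤ} (hf : IsAffinePerm n f) :
    (inversions n f).Finite := by
  rcases n.eq_zero_or_pos with rfl | hn
  · simp [inversions_zero]
  obtain ⟨m, hm⟩ := ((Set.finite_Ico (0 : ℤ) n).image fun x => f x - x).bddBelow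
  obtain ⟨M, hM⟩ := ((Set.finite_Icc (1 : ℤ) n).image f).bddAbove
  have hlow : ∀ x, m ≤ f x - x := fun x => by
    obtain ⟨y, hy, hxy⟩ := hf.periodic_sub_id.exists_mem_Ico₀ (by exact_mod_cast hn) x
    exact hxy ▸ hm ⟨y, hy, rfl⟩
  refine ((Set.finite_Icc (1 : ℤ) n).prod (Set.finite_Icc (1 : ℤ) (M - m))).subset ?_
  rintro ⟨a, b⟩ ⟨h1, h2, hab, hfab : f b < f a⟩
  have hfa : f a ≤ M := hM ⟨a, ⟨h1, h2⟩, rfl⟩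
  have hb := hlow b
  exact ⟨⟨h1, h2⟩, by omega, by omega⟩

theorem eq_zero_of_mem_Icc_of_add_mul_mem_Icc {n : ℕ} {a c : ℤ}
    (ha : a ∈ Set.Icc (1 : ℤ) n) (hac : a + c * n ∈ Set.Icc (1 : ℤ) n) : c = 0 := by
  obtain ⟨ha1, ha2⟩ := ha
  obtain ⟨hac1, hac2⟩ := hac
  rcases lt_trichotomy c 0 with hc | hc | hc
  · nlinarith
  · exact hc
  · nlinarith

/-- `(a, b) ↦ (v a, v b)`, translated diagonally into the window `[1, n]`, is injective because
`v` commutes with these translations and `a` already lies in the window. -/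
theorem ncard_inversions_mul_sdiff_le {n : ℕ} {u v : Equiv.Perm ℤ}
    (hu : IsAffinePerm n u) (hv : IsAffinePerm n v) :
    (inversions n (u * v) \ inversions n v).ncard ≤ (inversions n u).ncard := by
  rcases n.eq_zero_or_pos with rfl | hn
  · simp [inversions_zero]
  have hn' : (0 : ℤ) < n := by exact_mod_cast hn
  obtain ⟨q, hq⟩ : ∃ q : ℤ → ℤ, ∀ x, x - q x * n ∈ Set.Icc (1 : ℤ) n := by
    refine ⟨toIcoDiv hn' 1, fun x => ?_⟩
    have := sub_toIcoDiv_zsmul_mem_Ico hn' 1 x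
    simp only [smul_eq_mul, Set.mem_Ico] at this
    exact ⟨this.1, by omega⟩
  let ψ : ℤ × ℤ → ℤ × ℤ := fun p => (v p.1 - q (v p.1) * n, v p.2 - q (v p.1) * n)
  have hmaps : Set.MapsTo ψ (inversions n (u * v) \ inversions n v) (inversions n u) := by
    rintro ⟨a, b⟩ ⟨⟨h1, h2, hab, huv⟩, hnot⟩
    have hvab : v a < v b := by
      refine lt_of_le_of_ne ?_ (v.injective.ne hab.ne)
      exact not_lt.mp fun h => hnot ⟨h1, h2, hab, h⟩
    refine ⟨(hq _).1, (hq _).2, by simp [ψ, hvab], ?_⟩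
    simpa [ψ, hu.apply_sub_mul] using huv
  have hinj : Set.InjOn ψ (inversions n (u * v) \ inversions n v) := by
    rintro ⟨a, b⟩ ⟨⟨h1, h2, -⟩, -⟩ ⟨a', b'⟩ ⟨⟨h1', h2', -⟩, -⟩ heq
    simp only [ψ, Prod.mk.injEq] at heq
    have ha' : a' = a + (q (v a') - q (v a)) * n :=
      v.injective (by rw [hv.apply_add_mul]; linarith)
    have hc : q (v a') - q (v a) = 0 :=
      eq_zero_of_mem_Icc_of_add_mul_mem_Icc ⟨h1, h2⟩ (ha' ▸ ⟨h1', h2'⟩)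
    have hb' : v b = v b' := by linear_combination heq.2 - n * hc
    simp only [Prod.mk.injEq, v.injective hb', and_true]
    linear_combination -ha' - n * hc
  exact Set.ncard_le_ncard_of_injOn ψ hmaps hinj (inversions_finite hu)

theorem aLen_mul_le {n : ℕ} {u v : Equiv.Perm ℤ} (hu : IsAffinePerm n u)
    (hv : IsAffinePerm n v) : aLen n (u * v) ≤ aLen n u + aLen n v := by
  simp only [aLen_eq_ncard_inversions]
  calc (inversions n (u * v)).ncard
      ≤ (inversions n (u * v) \ inversions n v).ncard + (inversions n v).ncard :=
        Set.ncard_le_ncard_sdiff_add_ncard _ _ (inversions_finite hv)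
    _ ≤ (inversions n u).ncard + (inversions n v).ncard :=
        Nat.add_le_add_right (ncard_inversions_mul_sdiff_le hu hv) _

theorem conjugate_length_le_general
    (n k : ℕ) (f i : Equiv.Perm ℤ)
    (hfB : f ∈ Bound k n)
    (hiB : i ∈ Bound k n)
    (hle : LeR n i f) :
    aLen n (i⁻¹ * f * i) ≤ aLen n f := by
  have hi : IsAffinePerm n i := hiB.1
  calc aLen n (i⁻¹ * f * i) ≤ aLen n (i⁻¹ * f) + aLen n i := aLen_mul_le (hi.inv.mul hfB.1) hi
    _ = aLen n f := (add_comm _ _).trans hle.symm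

/-- If `ι ≤_∘ π` with lifts `i, f ∈ Bound(k,n)`, then `ℓ(i⁻¹·f·i) ≤ ℓ(f)`. -/
theorem conjugate_length_le
    (n k : ℕ) (π ι : Equiv.Perm (Fin n)) (f i : Equiv.Perm ℤ)
    (hπ : IsType k n π) (hι : IsType k n ι)
    (hf : IsLift n π f) (hfB : f ∈ Bound k n)
    (hi : IsLift n ι i) (hiB : i ∈ Bound k n)
    (hle : LeR n i f) :
    aLen n (i⁻¹ * f * i) ≤ aLen n f :=
  conjugate_length_le_general n k f i hfB hiB hle
end
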